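/- In the Weyl algebra, for a non-crossing diagram D = (c_1,…,c_p) with all chords c_s = (i_s, j_s) satisfying i_s < j_s, the product L_D = L_{c_1}⋯L_{c_p} equals, modulo the span of products of fewer than p pairs of generators (lower filtration order), the monomial m_D plus an integer linear combination of monomials m_{D'} over diagrams D' of the same length that are strictly greater than D in the lexicographic order on diagrams. -/

import Mathlib

open scoped BigOperators

/-- Weak lexicographic order on chords. -/
def chordLe {n : ℕ} (c d : Fin n × Fin n) : Prop :=
  c.1 < d.1 ∨ (c.1 = d.1 ∧ c.2 ≤ d.2)

/-- Strict lexicographic order on chords. -/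
def chordLt {n : ℕ} (c d : Fin n × Fin n) : Prop :=
  c.1 < d.1 ∨ (c.1 = d.1 ∧ c.2 < d.2)

/-- The angular momentum operator `L_c = x_i y_j - x_j y_i` of a chord `c = (i,j)`. -/
def Lchord {R : Type} [Ring R] {n : ℕ} (x y : Fin n → R) (c : Fin n × Fin n) : R :=
  x c.1 * y c.2 - x c.2 * y c.1

/-- The ordered product `L_D = L_{c₁} ⋯ L_{c_p}` of a diagram `D`. -/
def Ldiag {R : Type} [Ring R] {n : ℕ} (x y : Fin n → R)
    (D : List (Fin n × Fin n)) : R :=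
  (D.map (Lchord x y)).prod

/-- The normally ordered monomial `m_D = x^{α(D)} y^{β(D)}` of a diagram `D`. -/
def mdiag {R : Type} [Ring R] {n : ℕ} (x y : Fin n → R)
    (D : List (Fin n × Fin n)) : R :=
  ((List.finRange n).map fun i => x i ^ (D.map Prod.fst).count i).prod *
    ((List.finRange n).map fun i => y i ^ (D.map Prod.snd).count i).prod

/-- The `p`-th filtration piece of the Weyl algebra: the span of all products of at most
`p` generators. -/
def weylFilt {R : Type} [Ring R] [Algebra ℂ R] {n : ℕ} (x y : Fin n → R)
    (p : ℕ) : Submodule ℂ R :=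
  Submodule.span ℂ
    {w | ∃ l : List R, l.length ≤ p ∧ (∀ g ∈ l, (∃ i, g = x i) ∨ (∃ i, g = y i)) ∧
      w = l.prod}

/-!
Expanding the product, `L_D` is the signed sum of the words `x_{i₁} y_{j₁} ⋯ x_{i_p} y_{j_p}` over
all reversals `E` of the chords of `D`, and `E = D` occurs exactly once, with sign `+1`, because no
chord is a loop. All commutators of generators are scalars, so every such word agrees with its
normal ordering `m_E = m_{sort E}` modulo words of length at most `2p - 2`. Finally, each chord of
`E` is at least the corresponding chord of `D`, and sorting a list that dominates a sorted list
termwise can only raise it lexicographically; as `D` is the only reversal of itself with all chords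
increasing, `sort E > D` whenever `E ≠ D`.
-/

open List

section WordFiltration

variable (K : Type*) {R ι : Type*} [CommRing K] [Ring R] [Algebra K R] (g : ι → R)

def wordFilt (p : ℕ) : Submodule K R :=
  Submodule.span K ((fun l : List ι => (l.map g).prod) '' {l | l.length ≤ p})

variable {K g}

theorem prod_map_mem_wordFilt {l : List ι} {p : ℕ} (h : l.length ≤ p) :
    (l.map g).prod ∈ wordFilt K g p :=
  Submodule.subset_span ⟨l, h, rfl⟩

theorem wordFilt_mono {p q : ℕ} (h : p ≤ q) : wordFilt K g p ≤ wordFilt K g q :=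
  Submodule.span_mono (Set.image_mono fun _ hl => le_trans hl h)

theorem prod_map_sub_prod_map_mem_wordFilt_of_perm
    (hcomm : ∀ a b, ∃ c : K, g a * g b - g b * g a = algebraMap K R c)
    {l₁ l₂ : List ι} (h : l₁ ~ l₂) :
    (l₁.map g).prod - (l₂.map g).prod ∈ wordFilt K g (l₁.length - 2) := by
  -- Generalizing over a prefix `u` keeps the `cons` step free of truncated subtraction.
  suffices ∀ u : List ι, ((u ++ l₁).map g).prod - ((u ++ l₂).map g).prod ∈
      wordFilt K g (u.length + l₁.length - 2) by simpa using this []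
  induction h with
  | nil => simp
  | cons a _ ih =>
    intro u
    simpa [add_comm 1, add_assoc] using ih (u ++ [a])
  | swap a b l =>
    intro u
    obtain ⟨c, hc⟩ := hcomm b a
    have : ((u ++ b :: a :: l).map g).prod - ((u ++ a :: b :: l).map g).prod =
        c • ((u ++ l).map g).prod := by
      conv_rhs => rw [map_append, prod_append, Algebra.smul_def, ← mul_assoc, Algebra.commutes,
        mul_assoc, ← hc]
      simp only [map_append, map_cons, prod_append, prod_cons]
      noncomm_ring
    rw [this]
    exact Submodule.smul_mem _ _ (prod_map_mem_wordFilt (by simp; omega))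
  | trans h₁₂ _ ih₁₂ ih₂₃ =>
    intro u
    rw [← sub_add_sub_cancel]
    exact add_mem (ih₁₂ u) (h₁₂.length_eq ▸ ih₂₃ u)

end WordFiltration

theorem perm_flatMap_replicate_count {α : Type*} [DecidableEq α] {l u : List α} (hu : u.Nodup)
    (hl : ∀ a ∈ l, a ∈ u) : l ~ u.flatMap fun a => replicate (l.count a) a := by
  rw [perm_iff_count]
  intro a
  rw [count_flatMap, ← sum_toFinset _ hu]
  simpa [count_replicate] using fun h => count_eq_zero.mpr (mt (hl a) h)

section SortedLex

variable {α : Type*} [LinearOrder α]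

theorem cons_lex_or_eq_cons_iff {a b : α} {A B : List α} :
    (Lex (· < ·) (a :: A) (b :: B) ∨ a :: A = b :: B) ↔
      a < b ∨ a = b ∧ (Lex (· < ·) A B ∨ A = B) := by
  rw [cons_lex_cons_iff, cons_eq_cons]
  tauto

theorem cons_lex_or_eq_orderedInsert {a c : α} {A B : List α} (hac : a ≤ c)
    (hA : ∀ x ∈ A, a ≤ x) (hlen : A.length = B.length) (hAB : Lex (· < ·) A B ∨ A = B) :
    Lex (· < ·) (a :: A) (B.orderedInsert (· ≤ ·) c) ∨ a :: A = B.orderedInsert (· ≤ ·) c := by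
  induction B generalizing A with
  | nil =>
    rw [length_eq_zero_iff.mp hlen, orderedInsert_nil, cons_lex_or_eq_cons_iff]
    exact hac.lt_or_eq.imp_right (⟨·, .inr rfl⟩)
  | cons b B ih =>
    rw [orderedInsert_cons]
    split_ifs with hcb <;> rw [cons_lex_or_eq_cons_iff]
    · exact hac.lt_or_eq.imp_right (⟨·, hAB⟩)
    obtain ⟨a', A, rfl⟩ := exists_cons_of_length_eq_add_one hlen
    have ha' : a ≤ a' := hA a' mem_cons_self
    rcases cons_lex_or_eq_cons_iff.mp hAB with hlt | ⟨rfl, hAB'⟩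
    · exact .inl (ha'.trans_lt hlt)
    rcases ha'.lt_or_eq with hlt | rfl
    · exact .inl hlt
    exact .inr ⟨rfl, ih (fun x hx => hA x (mem_cons_of_mem _ hx)) (by simpa using hlen) hAB'⟩

theorem lex_or_eq_of_forall₂_le_of_perm {A C B : List α} (hA : A.Pairwise (· ≤ ·))
    (hAC : Forall₂ (· ≤ ·) A C) (hB : B.Pairwise (· ≤ ·)) (hCB : C ~ B) :
    Lex (· < ·) A B ∨ A = B := by
  induction hAC generalizing B with
  | nil => simp [hCB.symm.eq_nil]
  | @cons a c A C hac hAC ih =>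
    set B' := C.insertionSort (· ≤ ·)
    have hB' : B = B'.orderedInsert (· ≤ ·) c :=
      (hCB.symm.trans (((perm_insertionSort _ C).symm.cons c).trans
        (perm_orderedInsert _ c B').symm)).eq_of_pairwise' hB
        ((pairwise_insertionSort _ C).orderedInsert c B')
    rw [hB']
    exact cons_lex_or_eq_orderedInsert hac (fun x hx => rel_of_pairwise_cons hA hx)
      (hAC.length_eq.trans (perm_insertionSort _ C).length_eq.symm)
      (ih hA.of_cons (pairwise_insertionSort _ C) (perm_insertionSort _ C).symm)

end SortedLex

section Reversals

variable {α : Type*}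

def reversals (D : List (α × α)) : Set (List (α × α)) :=
  {E | Forall₂ (fun c e => e = c ∨ e = c.swap) D E}

theorem self_mem_reversals (D : List (α × α)) : D ∈ reversals D :=
  forall₂_same.mpr fun _ _ => .inl rfl

theorem cons_mem_reversals {c e : α × α} {D E : List (α × α)} (he : e = c ∨ e = c.swap)
    (hE : E ∈ reversals D) : e :: E ∈ reversals (c :: D) :=
  Forall₂.cons he hE

theorem forall_mem_of_mem_reversals {p : α × α → Prop} (hp : ∀ c, p c → p c.swap)
    {D E : List (α × α)} (hD : ∀ c ∈ D, p c) (hE : E ∈ reversals D) : ∀ e ∈ E, p e := by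
  induction hE with
  | nil => simp
  | cons hce _ ih =>
    simp only [mem_cons, forall_eq_or_imp] at hD ⊢
    exact ⟨hce.elim (· ▸ hD.1) (· ▸ hp _ hD.1), ih hD.2⟩

theorem eq_of_mem_reversals [Preorder α] {D E : List (α × α)} (hD : ∀ c ∈ D, c.1 < c.2)
    (hE : ∀ e ∈ E, e.1 < e.2) (hDE : E ∈ reversals D) : E = D := by
  induction hDE with
  | nil => rfl
  | @cons c e D E hce _ ih =>
    simp only [mem_cons, forall_eq_or_imp] at hD hE
    obtain rfl : e = c := hce.resolve_right fun h => (h ▸ hE.1).asymm hD.1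
    rw [ih hD.2 hE.2]

end Reversals

section Weyl

variable {R : Type} [Ring R] {n : ℕ} (x y : Fin n → R)

def wdiag (E : List (Fin n × Fin n)) : R :=
  (E.map fun c => x c.1 * y c.2).prod

def chordLetters (E : List (Fin n × Fin n)) : List (Fin n ⊕ Fin n) :=
  E.flatMap fun c => [.inl c.1, .inr c.2]

def normalLetters (E : List (Fin n × Fin n)) : List (Fin n ⊕ Fin n) :=
  ((finRange n).flatMap fun i => replicate ((E.map Prod.fst).count i) (.inl i)) ++
    (finRange n).flatMap fun i => replicate ((E.map Prod.snd).count i) (.inr i)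

theorem length_chordLetters (E : List (Fin n × Fin n)) :
    (chordLetters E).length = 2 * E.length := by
  simp [chordLetters, length_flatMap, mul_comm]

theorem chordLetters_perm_normalLetters (E : List (Fin n × Fin n)) :
    chordLetters E ~ normalLetters E := by
  have hsplit : chordLetters E ~ (E.map Prod.fst).map .inl ++ (E.map Prod.snd).map .inr := by
    induction E with
    | nil => rfl
    | cons c E ih =>
      simp only [chordLetters, flatMap_cons, map_cons] at ih ⊢
      exact ((ih.cons _).trans perm_middle.symm).cons _
  have hsort (l : List (Fin n)) :=
    perm_flatMap_replicate_count (l := l) (nodup_finRange n) fun a _ => mem_finRange a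
  refine hsplit.trans (Perm.append ?_ ?_)
  · simpa [map_flatMap] using (hsort (E.map Prod.fst)).map Sum.inl
  · simpa [map_flatMap] using (hsort (E.map Prod.snd)).map Sum.inr

theorem prod_chordLetters (E : List (Fin n × Fin n)) :
    ((chordLetters E).map (Sum.elim x y)).prod = wdiag x y E := by
  simp [chordLetters, wdiag, flatMap_def, prod_flatten, Function.comp_def]

theorem prod_normalLetters (E : List (Fin n × Fin n)) :
    ((normalLetters E).map (Sum.elim x y)).prod = mdiag x y E := by
  simp [normalLetters, mdiag, flatMap_def, prod_flatten, Function.comp_def]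

theorem mdiag_perm {E E' : List (Fin n × Fin n)} (h : E ~ E') : mdiag x y E = mdiag x y E' := by
  simp only [mdiag, ((h.map Prod.fst).count_eq ·), ((h.map Prod.snd).count_eq ·)]

theorem wdiag_cons (c : Fin n × Fin n) (E : List (Fin n × Fin n)) :
    wdiag x y (c :: E) = x c.1 * y c.2 * wdiag x y E :=
  prod_cons

theorem mul_mem_span_wdiag_image {e : Fin n × Fin n} {A : Set (List (Fin n × Fin n))} {w : R}
    (hw : w ∈ Submodule.span ℤ (wdiag x y '' A)) :
    x e.1 * y e.2 * w ∈ Submodule.span ℤ (wdiag x y '' ((e :: ·) '' A)) := by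
  have : wdiag x y ∘ (e :: ·) = LinearMap.mulLeft ℤ (x e.1 * y e.2) ∘ wdiag x y :=
    funext (wdiag_cons x y e)
  rw [← Set.image_comp, this, Set.image_comp, ← Submodule.map_span]
  exact Submodule.mem_map_of_mem hw

theorem Ldiag_sub_wdiag_mem_span {D : List (Fin n × Fin n)} (hD : ∀ c ∈ D, c.1 ≠ c.2) :
    Ldiag x y D - wdiag x y D ∈ Submodule.span ℤ (wdiag x y '' (reversals D \ {D})) := by
  induction D with
  | nil => simp [Ldiag, wdiag]
  | cons c D ih =>
    simp only [mem_cons, forall_eq_or_imp] at hD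
    set s := Ldiag x y D - wdiag x y D
    have hs := ih hD.2
    have hL : Ldiag x y (c :: D) - wdiag x y (c :: D) =
        x c.1 * y c.2 * s - x c.2 * y c.1 * (wdiag x y D + s) := by
      simp only [s, Ldiag, map_cons, prod_cons, wdiag_cons, Lchord]
      noncomm_ring
    have hkeep : (c :: ·) '' (reversals D \ {D}) ⊆ reversals (c :: D) \ {c :: D} := by
      rintro _ ⟨E, ⟨hE, hED⟩, rfl⟩
      exact ⟨cons_mem_reversals (.inl rfl) hE, fun h => hED (cons_injective h)⟩
    have hflip : (c.swap :: ·) '' reversals D ⊆ reversals (c :: D) \ {c :: D} := by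
      rintro _ ⟨E, hE, rfl⟩
      refine ⟨cons_mem_reversals (.inr rfl) hE, fun h => hD.1 ?_⟩
      exact (congrArg Prod.fst (head_eq_of_cons_eq h)).symm
    have hsum : wdiag x y D + s ∈ Submodule.span ℤ (wdiag x y '' reversals D) :=
      add_mem (Submodule.subset_span ⟨D, self_mem_reversals D, rfl⟩)
        (Submodule.span_mono (Set.image_mono Set.sdiff_subset) hs)
    rw [hL]
    refine sub_mem ?_ ?_
    · exact Submodule.span_mono (Set.image_mono hkeep) (mul_mem_span_wdiag_image x y hs)
    · exact Submodule.span_mono (Set.image_mono hflip)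
        (mul_mem_span_wdiag_image (e := c.swap) x y hsum)

variable [Algebra ℂ R]

theorem wordFilt_le_weylFilt (p : ℕ) : wordFilt ℂ (Sum.elim x y) p ≤ weylFilt x y p := by
  refine Submodule.span_mono ?_
  rintro _ ⟨l, hl, rfl⟩
  refine ⟨l.map (Sum.elim x y), by simpa using hl, ?_, rfl⟩
  simp only [mem_map]
  rintro _ ⟨a | a, -, rfl⟩
  exacts [.inl ⟨a, rfl⟩, .inr ⟨a, rfl⟩]

end Weyl

section WeylRelations

variable {R : Type} [Ring R] [Algebra ℂ R] {n : ℕ} {x y : Fin n → R}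
  (hyx : ∀ i j, y i * x j - x j * y i = if i = j then 1 else 0)
  (hxx : ∀ i j, x i * x j = x j * x i)
  (hyy : ∀ i j, y i * y j = y j * y i)

include hyx hxx hyy

theorem exists_commutator_eq_algebraMap (a b : Fin n ⊕ Fin n) :
    ∃ c : ℂ, Sum.elim x y a * Sum.elim x y b - Sum.elim x y b * Sum.elim x y a =
      algebraMap ℂ R c := by
  rcases a with i | i <;> rcases b with j | j
  · exact ⟨0, by simp [hxx i j]⟩
  · refine ⟨-if j = i then 1 else 0, ?_⟩
    rw [Sum.elim_inl, Sum.elim_inr, ← neg_sub, hyx]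
    split_ifs <;> simp
  · refine ⟨if i = j then 1 else 0, ?_⟩
    rw [Sum.elim_inl, Sum.elim_inr, hyx]
    split_ifs <;> simp
  · exact ⟨0, by simp [hyy i j]⟩

theorem wdiag_sub_mdiag_mem_weylFilt (E : List (Fin n × Fin n)) :
    wdiag x y E - mdiag x y E ∈ weylFilt x y (2 * E.length - 1) := by
  have h := prod_map_sub_prod_map_mem_wordFilt_of_perm
    (exists_commutator_eq_algebraMap hyx hxx hyy) (chordLetters_perm_normalLetters E)
  rw [prod_chordLetters, prod_normalLetters, length_chordLetters] at h
  exact wordFilt_le_weylFilt x y _ (wordFilt_mono (by omega) h)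

theorem span_wdiag_image_le {A : Set (List (Fin n × Fin n))} {p : ℕ}
    (hA : ∀ E ∈ A, E.length = p) :
    Submodule.span ℤ (wdiag x y '' A) ≤
      Submodule.span ℤ (mdiag x y '' A) ⊔ (weylFilt x y (2 * p - 1)).restrictScalars ℤ := by
  rw [Submodule.span_le]
  rintro _ ⟨E, hE, rfl⟩
  rw [← sub_add_cancel (wdiag x y E) (mdiag x y E)]
  refine add_mem (Submodule.mem_sup_right ?_)
    (Submodule.mem_sup_left (Submodule.subset_span ⟨E, hE, rfl⟩))
  simpa [hA E hE] using wdiag_sub_mdiag_mem_weylFilt hyx hxx hyy E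

end WeylRelations

section ChordSort

variable {n : ℕ}

theorem chordLe_iff_toLex_le {c d : Fin n × Fin n} : chordLe c d ↔ toLex c ≤ toLex d :=
  Prod.Lex.toLex_le_toLex.symm

theorem chordLt_iff_toLex_lt {c d : Fin n × Fin n} : chordLt c d ↔ toLex c < toLex d :=
  Prod.Lex.toLex_lt_toLex.symm

def chordSort (E : List (Fin n × Fin n)) : List (Fin n × Fin n) :=
  ((E.map toLex).insertionSort (· ≤ ·)).map ofLex

theorem chordSort_perm (E : List (Fin n × Fin n)) : chordSort E ~ E := by
  simpa [chordSort, Function.comp_def] using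
    (perm_insertionSort (· ≤ ·) (E.map toLex)).map ofLex

theorem pairwise_chordSort (E : List (Fin n × Fin n)) : (chordSort E).Pairwise chordLe := by
  simpa [chordSort, pairwise_map, chordLe_iff_toLex_le] using
    pairwise_insertionSort (· ≤ ·) (E.map toLex)

theorem lex_or_eq_chordSort {D E : List (Fin n × Fin n)} (hD : D.Pairwise chordLe)
    (hDE : Forall₂ chordLe D E) : Lex chordLt D (chordSort E) ∨ D = chordSort E :=
  (lex_or_eq_of_forall₂_le_of_perm (α := Fin n ×ₗ Fin n) (hD.imp chordLe_iff_toLex_le.mp)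
    (hDE.imp fun _ _ => chordLe_iff_toLex_le.mp)
    ((pairwise_chordSort E).imp chordLe_iff_toLex_le.mp) (chordSort_perm E).symm).imp_left
    (Lex.imp (fun _ _ => chordLt_iff_toLex_lt.mpr) _ _)

def higherDiagrams (D : List (Fin n × Fin n)) : Set (List (Fin n × Fin n)) :=
  {D' | D'.length = D.length ∧ D'.Pairwise chordLe ∧ (∀ c ∈ D', c.1 ≠ c.2) ∧ Lex chordLt D D'}

theorem chordSort_mem_higherDiagrams {D E : List (Fin n × Fin n)} (hsort : D.Pairwise chordLe)
    (hij : ∀ c ∈ D, c.1 < c.2) (hE : E ∈ reversals D \ {D}) : chordSort E ∈ higherDiagrams D := by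
  obtain ⟨hE, hED⟩ := hE
  refine ⟨(chordSort_perm E).length_eq.trans hE.length_eq.symm, pairwise_chordSort E,
    fun c hc => ?_, ?_⟩
  · exact forall_mem_of_mem_reversals (p := fun c => c.1 ≠ c.2) (fun _ h => h.symm)
      (fun c hc => (hij c hc).ne) hE c ((chordSort_perm E).subset hc)
  · have hle : Forall₂ chordLe D E := ((forall₂_and_left D E).mpr ⟨hij, hE⟩).imp
      fun c _ ⟨hc, he⟩ => he.elim (fun h => h ▸ .inr ⟨rfl, le_rfl⟩) (fun h => h ▸ .inl hc)
    refine (lex_or_eq_chordSort hsort hle).resolve_right fun h => hED ?_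
    have hperm : E ~ D := h ▸ (chordSort_perm E).symm
    exact eq_of_mem_reversals hij (fun e he => hij e (hperm.subset he)) hE

end ChordSort

theorem stmt19_general {R : Type} [Ring R] [Algebra ℂ R] {n : ℕ} (x y : Fin n → R)
    (hyx : ∀ i j, y i * x j - x j * y i = if i = j then 1 else 0)
    (hxx : ∀ i j, x i * x j = x j * x i)
    (hyy : ∀ i j, y i * y j = y j * y i)
    (D : List (Fin n × Fin n))
    (hsort : D.Pairwise chordLe)
    (hij : ∀ c ∈ D, c.1 < c.2) :
    ∃ (S : Finset (List (Fin n × Fin n))) (lam : List (Fin n × Fin n) → ℤ),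
      (∀ D' ∈ S, D'.length = D.length ∧ D'.Pairwise chordLe ∧ (∀ c ∈ D', c.1 ≠ c.2) ∧
        List.Lex chordLt D D') ∧
      Ldiag x y D - mdiag x y D - ∑ D' ∈ S, lam D' • mdiag x y D' ∈
        weylFilt x y (2 * D.length - 1) := by
  set A := reversals D \ {D}
  have hexp : Ldiag x y D - mdiag x y D ∈ Submodule.span ℤ (mdiag x y '' A) ⊔
      (weylFilt x y (2 * D.length - 1)).restrictScalars ℤ := by
    rw [← sub_add_sub_cancel _ (wdiag x y D)]
    refine add_mem (span_wdiag_image_le hyx hxx hyy (fun E hE => hE.1.length_eq.symm)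
      (Ldiag_sub_wdiag_mem_span x y fun c hc => (hij c hc).ne)) ?_
    exact Submodule.mem_sup_right (wdiag_sub_mdiag_mem_weylFilt hyx hxx hyy D)
  have hsorted : mdiag x y '' A ⊆ mdiag x y '' higherDiagrams D := by
    rintro _ ⟨E, hE, rfl⟩
    exact ⟨chordSort E, chordSort_mem_higherDiagrams hsort hij hE,
      mdiag_perm x y (chordSort_perm E)⟩
  obtain ⟨s, hs, f, hf, hsf⟩ := Submodule.mem_sup.mp hexp
  obtain ⟨l, hl, rfl⟩ :=
    (Finsupp.mem_span_image_iff_linearCombination ℤ).mp (Submodule.span_mono hsorted hs)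
  refine ⟨l.support, l, fun D' hD' => hl hD', ?_⟩
  rwa [← hsf, Finsupp.linearCombination_apply, Finsupp.sum, add_sub_cancel_left]

/-- For a non-crossing diagram `D` (a weakly increasing list of chords `(i,j)` with
`i < j` and no crossing), `L_D` equals, modulo lower filtration order, `m_D` plus an
integer combination of monomials `m_{D'}` over diagrams `D'` of the same length that are
strictly greater than `D` in the lexicographic order. -/
theorem stmt19 {R : Type} [Ring R] [Algebra ℂ R] {n : ℕ} (x y : Fin n → R)
    (hyx : ∀ i j, y i * x j - x j * y i = if i = j then 1 else 0)
    (hxx : ∀ i j, x i * x j = x j * x i)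
    (hyy : ∀ i j, y i * y j = y j * y i)
    (D : List (Fin n × Fin n))
    (hsort : D.Pairwise chordLe)
    (hij : ∀ c ∈ D, c.1 < c.2)
    (hnc : ∀ c ∈ D, ∀ c' ∈ D, c.1 < c'.1 → c'.1 < c.2 → c'.2 ≤ c.2) :
    ∃ (S : Finset (List (Fin n × Fin n))) (lam : List (Fin n × Fin n) → ℤ),
      (∀ D' ∈ S, D'.length = D.length ∧ D'.Pairwise chordLe ∧ (∀ c ∈ D', c.1 ≠ c.2) ∧
        List.Lex chordLt D D') ∧
      Ldiag x y D - mdiag x y D - ∑ D' ∈ S, lam D' • mdiag x y D' ∈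
        weylFilt x y (2 * D.length - 1) :=
  stmt19_general x y hyx hxx hyy D hsort hij
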